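/- Let the n variables be partitioned into k groups of sizes n₁,…,n_k, and write multi-indices as α = (α₁,…,α_k) with α_j ∈ ℕ^{n_j}. Let y : ℕⁿ → ℝ with y₀ = 1 be such that M_d(y) is positive definite and L_y satisfies the partial independence property with respect to this grouping. For each group j, let (p^{(j)}_{α_j}) be the orthonormal polynomials in the variables X(j) associated with the restriction of L_y to polynomials in X(j). Then the orthonormal polynomials of L_y factor along the groups: p_α(X) = p^{(1)}_{α₁}(X(1))·p^{(2)}_{α₂}(X(2))⋯p^{(k)}_{α_k}(X(k)) for every α with |α| ≤ d; in particular p_α(X) = Σ c_{α,γ} X^γ, where the sum runs only over γ = (γ₁,…,γ_k) with γ_j ≤_gl α_j for all j. -/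

import Mathlib

open scoped BigOperators
open MvPolynomial Matrix

namespace Paper

/-- Total degree `|α|` of a multi-index `α`. -/
def degSum {n : ℕ} (α : Fin n → ℕ) : ℕ := ∑ i, α i

lemma apply_le_degSum {n : ℕ} (α : Fin n → ℕ) (i : Fin n) : α i ≤ degSum α :=
  Finset.single_le_sum (fun _ _ => Nat.zero_le _) (Finset.mem_univ i)

noncomputable instance midxFintype (n d : ℕ) : Fintype {α : Fin n → ℕ // degSum α ≤ d} :=
  Fintype.ofInjective
    (fun a => (fun i => (⟨a.1 i, Nat.lt_succ_of_le (le_trans (apply_le_degSum a.1 i) a.2)⟩ :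
        Fin (d+1))))
    (fun a b h => Subtype.ext (funext fun i => congrArg Fin.val (congrFun h i)))

/-- The index set of the truncated moment matrix: multi-indices of total degree at most `d`. -/
abbrev MIdx (n d : ℕ) := {α : Fin n → ℕ // degSum α ≤ d}

/-- The truncated moment matrix `M_d(y)`. -/
def momMat (n d : ℕ) (y : (Fin n → ℕ) → ℝ) : Matrix (MIdx n d) (MIdx n d) ℝ :=
  Matrix.of fun a b => y (a.1 + b.1)

/-- The Riesz functional `L_y` on multivariate polynomials. -/
noncomputable def Ly {n : ℕ} (y : (Fin n → ℕ) → ℝ) (p : MvPolynomial (Fin n) ℝ) : ℝ :=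
  ∑ m ∈ p.support, p.coeff m * y (fun i => m i)

/-- The monomial `X^α`. -/
noncomputable def mono {n : ℕ} (α : Fin n → ℕ) : MvPolynomial (Fin n) ℝ := ∏ i, X i ^ α i

/-- The coefficient of `X^γ` in `p`. -/
noncomputable def coeffOf {n : ℕ} (p : MvPolynomial (Fin n) ℝ) (γ : Fin n → ℕ) : ℝ :=
  p.coeff (Finsupp.equivFunOnFinite.symm γ)

section Basic
variable {n : ℕ} (y : (Fin n → ℕ) → ℝ)

lemma coeffOf_coe (p : MvPolynomial (Fin n) ℝ) (m : Fin n →₀ ℕ) :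
    coeffOf p ⇑m = p.coeff m := by
  simp [coeffOf, Finsupp.equivFunOnFinite.symm_apply_apply]

lemma coe_symm (α : Fin n → ℕ) : ⇑(Finsupp.equivFunOnFinite.symm α) = α := rfl

lemma Ly_eq_sum (p : MvPolynomial (Fin n) ℝ) {t : Finset (Fin n →₀ ℕ)}
    (h : p.support ⊆ t) : Ly y p = ∑ m ∈ t, p.coeff m * y ⇑m := by
  rw [Ly]
  exact Finset.sum_subset h (fun m _ hm => by
    simp [MvPolynomial.notMem_support_iff.mp hm])

lemma Ly_zero : Ly y 0 = 0 := by simp [Ly]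

lemma Ly_add (p q : MvPolynomial (Fin n) ℝ) : Ly y (p + q) = Ly y p + Ly y q := by
  rw [Ly_eq_sum y (p + q) (MvPolynomial.support_add),
    Ly_eq_sum y p (Finset.subset_union_left),
    Ly_eq_sum y q (Finset.subset_union_right), ← Finset.sum_add_distrib]
  exact Finset.sum_congr rfl fun m _ => by rw [MvPolynomial.coeff_add, add_mul]

lemma Ly_smul (c : ℝ) (p : MvPolynomial (Fin n) ℝ) : Ly y (c • p) = c * Ly y p := by
  rw [Ly_eq_sum y (c • p) (MvPolynomial.support_smul), Ly, Finset.mul_sum]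
  exact Finset.sum_congr rfl fun m _ => by
    rw [MvPolynomial.coeff_smul, smul_eq_mul, mul_assoc]

lemma Ly_sub (p q : MvPolynomial (Fin n) ℝ) : Ly y (p - q) = Ly y p - Ly y q := by
  have h : p - q = p + (-1 : ℝ) • q := by
    rw [neg_one_smul, sub_eq_add_neg]
  rw [h, Ly_add, Ly_smul]; ring

lemma Ly_sum {ι : Type} (s : Finset ι) (f : ι → MvPolynomial (Fin n) ℝ) :
    Ly y (∑ i ∈ s, f i) = ∑ i ∈ s, Ly y (f i) := by
  classical
  induction s using Finset.cons_induction with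
  | empty => simp [Ly_zero]
  | cons a s ha ih => rw [Finset.sum_cons, Finset.sum_cons, Ly_add, ih]

lemma mono_eq_monomial (α : Fin n → ℕ) :
    mono α = monomial (Finsupp.equivFunOnFinite.symm α) (1 : ℝ) := by
  rw [monomial_eq, C_1, one_mul,
    Finsupp.prod_fintype _ _ (fun i => pow_zero _)]
  rfl

lemma Ly_mono (α : Fin n → ℕ) : Ly y (mono α) = y α := by
  rw [mono_eq_monomial,
    Ly_eq_sum y _ (MvPolynomial.support_monomial_subset), Finset.sum_singleton,
    MvPolynomial.coeff_monomial, if_pos rfl, one_mul, coe_symm]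

lemma mono_zero : mono (0 : Fin n → ℕ) = 1 := by simp [mono]

lemma mono_add (α β : Fin n → ℕ) : mono (α + β) = mono α * mono β := by
  rw [mono, mono, mono, ← Finset.prod_mul_distrib]
  exact Finset.prod_congr rfl fun i _ => by rw [Pi.add_apply, pow_add]

lemma mono_sum {ι : Type} (s : Finset ι) (t : ι → (Fin n → ℕ)) :
    mono (∑ j ∈ s, t j) = ∏ j ∈ s, mono (t j) := by
  classical
  induction s using Finset.cons_induction with
  | empty => simp [mono_zero]
  | cons a s ha ih => rw [Finset.sum_cons, Finset.prod_cons, mono_add, ih]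

lemma monomial_eq_smul_mono (m : Fin n →₀ ℕ) (c : ℝ) :
    (monomial m c : MvPolynomial (Fin n) ℝ) = c • mono ⇑m := by
  rw [mono_eq_monomial, Finsupp.equivFunOnFinite_symm_coe,
    MvPolynomial.smul_monomial, smul_eq_mul, mul_one]

lemma Ly_mul_expand (w u : MvPolynomial (Fin n) ℝ) :
    Ly y (w * u) = ∑ m ∈ u.support, u.coeff m * Ly y (w * mono ⇑m) := by
  have h : w * u = ∑ m ∈ u.support, u.coeff m • (w * mono ⇑m) := by
    conv_lhs => rw [MvPolynomial.as_sum u]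
    rw [Finset.mul_sum]
    exact Finset.sum_congr rfl fun m _ => by
      rw [monomial_eq_smul_mono, mul_smul_comm]
  rw [h, Ly_sum]
  exact Finset.sum_congr rfl fun m _ => Ly_smul y _ _

lemma Ly_mul_mono (r : MvPolynomial (Fin n) ℝ) (β : Fin n → ℕ) :
    Ly y (r * mono β) = ∑ m ∈ r.support, r.coeff m * y (β + ⇑m) := by
  rw [mul_comm, Ly_mul_expand]
  exact Finset.sum_congr rfl fun m _ => by rw [← mono_add, Ly_mono]

end Basic

section Quad
variable {n d : ℕ} {y : (Fin n → ℕ) → ℝ}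

lemma sum_support_eq (r : MvPolynomial (Fin n) ℝ)
    (hdeg : ∀ m ∈ r.support, degSum ⇑m ≤ d) (F : (Fin n → ℕ) → ℝ) :
    ∑ m ∈ r.support, r.coeff m * F ⇑m = ∑ a : MIdx n d, coeffOf r a.1 * F a.1 := by
  classical
  have h1 : ∑ a : MIdx n d, coeffOf r a.1 * F a.1
      = ∑ a ∈ Finset.univ.filter
          (fun a : MIdx n d => (Finsupp.equivFunOnFinite.symm a.1) ∈ r.support),
        coeffOf r a.1 * F a.1 := by
    symm
    apply Finset.sum_subset (Finset.filter_subset _ _)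
    intro a _ ha
    have h0 : coeffOf r a.1 = 0 := by
      rw [coeffOf]
      exact MvPolynomial.notMem_support_iff.mp (by simpa using ha)
    rw [h0, zero_mul]
  rw [h1]
  refine Finset.sum_bij' (i := fun m hm => (⟨⇑m, hdeg m hm⟩ : MIdx n d))
    (j := fun a _ => Finsupp.equivFunOnFinite.symm a.1) ?_ ?_ ?_ ?_ ?_
  · intro m hm
    simp only [Finset.mem_filter, Finset.mem_univ, true_and]
    rw [Finsupp.equivFunOnFinite_symm_coe]
    exact hm
  · intro a ha
    exact (Finset.mem_filter.mp ha).2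
  · intro m hm
    exact Finsupp.equivFunOnFinite_symm_coe m
  · intro a ha
    exact Subtype.ext rfl
  · intro m hm
    rw [coeffOf_coe]

lemma Ly_quadratic (hpd : (momMat n d y).PosDef) (r : MvPolynomial (Fin n) ℝ)
    (hdeg : ∀ m ∈ r.support, degSum ⇑m ≤ d) (hz : Ly y (r * r) = 0) : r = 0 := by
  by_contra hr
  obtain ⟨m, hm⟩ := Finset.nonempty_iff_ne_empty.mpr
    (fun h => hr (MvPolynomial.support_eq_empty.mp h))
  set v : MIdx n d → ℝ := fun a => coeffOf r a.1 with hv_def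
  have hv : v ≠ 0 := by
    intro h
    have h2 : v ⟨⇑m, hdeg m hm⟩ = 0 := by rw [h]; rfl
    rw [hv_def] at h2
    simp only at h2
    rw [coeffOf_coe] at h2
    exact MvPolynomial.mem_support_iff.mp hm h2
  have hq := hpd.dotProduct_mulVec_pos hv
  have hcalc : Ly y (r * r) = star v ⬝ᵥ (momMat n d y) *ᵥ v := by
    calc Ly y (r * r)
        = ∑ m' ∈ r.support, r.coeff m' * Ly y (r * mono ⇑m') := Ly_mul_expand y r r
      _ = ∑ a : MIdx n d, coeffOf r a.1 * Ly y (r * mono a.1) :=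
          sum_support_eq r hdeg (fun β => Ly y (r * mono β))
      _ = ∑ a : MIdx n d, v a * ∑ b : MIdx n d, coeffOf r b.1 * y (a.1 + b.1) := by
          refine Finset.sum_congr rfl fun a _ => ?_
          rw [Ly_mul_mono, sum_support_eq r hdeg (fun γ => y (a.1 + γ))]
      _ = star v ⬝ᵥ (momMat n d y) *ᵥ v := by
          simp only [dotProduct, Matrix.mulVec, momMat, Matrix.of_apply, star_trivial]
          refine Finset.sum_congr rfl fun a _ => ?_
          rw [Finset.mul_sum, Finset.mul_sum]
          refine Finset.sum_congr rfl fun b _ => ?_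
          show v a * (coeffOf r b.1 * y (a.1 + b.1)) = v a * (y (a.1 + b.1) * v b)
          ring
  rw [hz] at hcalc
  rw [← hcalc] at hq
  exact lt_irrefl _ hq

end Quad


/-- Strict lexicographic order on multi-indices. -/
def lexLT {n : ℕ} (α β : Fin n → ℕ) : Prop :=
  ∃ i, (∀ j, j < i → α j = β j) ∧ α i < β i

/-- Strict graded lexicographic (GLex) order on multi-indices. -/
def glexLT {n : ℕ} (α β : Fin n → ℕ) : Prop :=
  degSum α < degSum β ∨ (degSum α = degSum β ∧ lexLT α β)

/-- Graded lexicographic order (reflexive version). -/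
def glexLE {n : ℕ} (α β : Fin n → ℕ) : Prop := glexLT α β ∨ α = β

section Order
variable {n : ℕ}

lemma degSum_le_of_glexLT {α β : Fin n → ℕ} (h : glexLT α β) : degSum α ≤ degSum β := by
  rcases h with h | ⟨h, _⟩
  · exact le_of_lt h
  · exact le_of_eq h

lemma degSum_le_of_glexLE {α β : Fin n → ℕ} (h : glexLE α β) : degSum α ≤ degSum β := by
  rcases h with h | rfl
  · exact degSum_le_of_glexLT h
  · exact le_rfl

lemma glexLT_of_glexLE_ne {α β : Fin n → ℕ} (h : glexLE α β) (hne : α ≠ β) : glexLT α β :=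
  h.resolve_right hne

end Order

section Supp
variable {n : ℕ}

lemma mem_support_prod {ι : Type} [DecidableEq ι] (s : Finset ι)
    (f : ι → MvPolynomial (Fin n) ℝ) (m : Fin n →₀ ℕ)
    (hm : m ∈ (∏ j ∈ s, f j).support) :
    ∃ t : ι → (Fin n →₀ ℕ), (∀ j ∈ s, t j ∈ (f j).support) ∧ m = ∑ j ∈ s, t j := by
  classical
  induction s using Finset.cons_induction generalizing m with
  | empty =>
    refine ⟨fun _ => 0, by simp, ?_⟩
    rw [Finset.prod_empty] at hm
    have h1 : m = 0 := by
      have := MvPolynomial.mem_support_iff.mp hm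
      rw [MvPolynomial.coeff_one] at this
      by_contra hc
      exact this (if_neg (fun h => hc h.symm))
    simp [h1]
  | cons a s ha ih =>
    rw [Finset.prod_cons] at hm
    have h2 := MvPolynomial.support_mul _ _ hm
    obtain ⟨ma, hma, mrest, hmrest, hsum⟩ := Finset.mem_add.mp h2
    obtain ⟨t, ht, hteq⟩ := ih mrest hmrest
    refine ⟨fun j => if j = a then ma else t j, ?_, ?_⟩
    · intro j hj
      rcases Finset.mem_cons.mp hj with rfl | hj'
      · simp [hma]
      · have hne : j ≠ a := fun h => ha (h ▸ hj')
        simp only [if_neg hne]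
        exact ht j hj'
    · rw [Finset.sum_cons, if_pos rfl, ← hsum, hteq]
      congr 1
      refine Finset.sum_congr rfl fun j hj => ?_
      have hne : j ≠ a := fun h => ha (h ▸ hj)
      simp only [if_neg hne]

lemma degSum_finsupp (m : Fin n →₀ ℕ) : (m.sum fun _ e => e) = degSum ⇑m := by
  rw [Finsupp.sum_fintype]
  · rfl
  · intro i; rfl

lemma totalDegree_le_of_support (p : MvPolynomial (Fin n) ℝ) (N : ℕ)
    (h : ∀ m ∈ p.support, degSum ⇑m ≤ N) : p.totalDegree ≤ N := by
  rw [MvPolynomial.totalDegree]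
  apply Finset.sup_le
  intro m hm
  rw [degSum_finsupp]
  exact h m hm

lemma totalDegree_mono_le (β : Fin n → ℕ) : (mono β).totalDegree ≤ degSum β := by
  apply totalDegree_le_of_support
  intro m hm
  rw [mono_eq_monomial] at hm
  have := MvPolynomial.support_monomial_subset hm
  rw [Finset.mem_singleton] at this
  subst this
  exact le_of_eq (congrArg degSum (coe_symm β))

lemma vars_mono {β : Fin n → ℕ} {i : Fin n} (hi : i ∈ (mono β).vars) : β i ≠ 0 := by
  rw [mono_eq_monomial] at hi
  rw [MvPolynomial.vars_monomial one_ne_zero] at hi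
  have := Finsupp.mem_support_iff.mp hi
  exact this

end Supp


/-- The product form (independence) property of `M_d(y)`:
`L_y(X^α) = ∏_i L_y(X_i^{α_i})` for all `|α| ≤ 2d`. -/
def ProductForm (n d : ℕ) (y : (Fin n → ℕ) → ℝ) : Prop :=
  ∀ α : Fin n → ℕ, degSum α ≤ 2*d → y α = ∏ i, y (Pi.single i (α i))

/-- The family of orthonormal polynomials `(p_α)_{|α| ≤ d}` associated with `y`:
GLex-triangular, orthonormal, orthogonal to lower monomials, positive leading term. -/
structure IsONFamily (n d : ℕ) (y : (Fin n → ℕ) → ℝ)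
    (p : (Fin n → ℕ) → MvPolynomial (Fin n) ℝ) : Prop where
  span : ∀ α, degSum α ≤ d → ∀ γ : Fin n → ℕ, coeffOf (p α) γ ≠ 0 → glexLE γ α
  orth : ∀ α β, degSum α ≤ d → degSum β ≤ d →
    Ly y (p α * p β) = if α = β then 1 else 0
  lower : ∀ α β, degSum α ≤ d → degSum β ≤ d → glexLT β α → Ly y (p α * mono β) = 0
  pos : ∀ α, degSum α ≤ d → 0 < Ly y (p α * mono α)


/-- The restriction of a multi-index `α` to the group `j` of the grouping `g`
(its component `α_j`, padded by zeros outside group `j`). -/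
def restr {n : ℕ} (k : ℕ) (g : Fin n → Fin k) (j : Fin k) (α : Fin n → ℕ) : Fin n → ℕ :=
  fun i => if g i = j then α i else 0

/-- The partial independence property of `L_y` with respect to the grouping `g` of the
variables into `k` groups: `L_y(f₁(X(1))⋯f_k(X(k))) = ∏_j L_y(f_j(X(j)))` whenever each
`f_j` depends only on the variables of group `j` and all relevant moments have total
degree at most `2d`. -/
def PartialIndep (n k d : ℕ) (g : Fin n → Fin k) (y : (Fin n → ℕ) → ℝ) : Prop :=
  ∀ f : Fin k → MvPolynomial (Fin n) ℝ,
    (∀ j, ∀ i ∈ (f j).vars, g i = j) →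
    (∑ j, (f j).totalDegree) ≤ 2*d →
    Ly y (∏ j, f j) = ∏ j, Ly y (f j)

/-- `α` is supported in the set `S` of variables. -/
def suppIn {n : ℕ} (S : Finset (Fin n)) (α : Fin n → ℕ) : Prop := ∀ i ∉ S, α i = 0

section Groups
variable {n k : ℕ} (g : Fin n → Fin k)

lemma sum_restr (α : Fin n → ℕ) : ∑ j, restr k g j α = α := by
  funext i
  rw [Finset.sum_apply]
  simp only [restr]
  rw [Finset.sum_ite_eq Finset.univ (g i) (fun _ => α i)]
  simp

lemma degSum_sum {ι : Type} (s : Finset ι) (t : ι → Fin n → ℕ) :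
    degSum (∑ j ∈ s, t j) = ∑ j ∈ s, degSum (t j) := by
  simp only [degSum, Finset.sum_apply]
  exact Finset.sum_comm

lemma degSum_eq_sum_restr (α : Fin n → ℕ) :
    degSum α = ∑ j, degSum (restr k g j α) := by
  conv_lhs => rw [← sum_restr g α]
  exact degSum_sum _ _

lemma degSum_restr_le (j : Fin k) (α : Fin n → ℕ) :
    degSum (restr k g j α) ≤ degSum α := by
  apply Finset.sum_le_sum
  intro i _
  simp only [restr]
  split <;> simp

lemma suppIn_restr (j : Fin k) (α : Fin n → ℕ) :
    suppIn (Finset.univ.filter fun i => g i = j) (restr k g j α) := by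
  intro i hi
  simp only [Finset.mem_filter, Finset.mem_univ, true_and] at hi
  simp [restr, hi]

lemma restr_eq_of_suppIn {j : Fin k} {γ : Fin n → ℕ}
    (h : suppIn (Finset.univ.filter fun i => g i = j) γ) : restr k g j γ = γ := by
  funext i
  by_cases hg : g i = j
  · simp [restr, hg]
  · simp only [restr, if_neg hg]
    exact (h i (by simp [hg])).symm

lemma restr_eq_zero_of_suppIn {j j' : Fin k} (hne : j' ≠ j) {γ : Fin n → ℕ}
    (h : suppIn (Finset.univ.filter fun i => g i = j) γ) : restr k g j' γ = 0 := by
  funext i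
  by_cases hg : g i = j'
  · simp only [restr, if_pos hg, Pi.zero_apply]
    exact h i (by simp [hg ▸ hne.symm]; intro hc; exact hne (hg ▸ hc ▸ rfl))
  · simp [restr, hg]

lemma restr_sum {ι : Type} (j : Fin k) (s : Finset ι) (t : ι → Fin n → ℕ) :
    restr k g j (∑ j' ∈ s, t j') = ∑ j' ∈ s, restr k g j (t j') := by
  funext i
  simp only [restr, Finset.sum_apply]
  by_cases h : g i = j
  · simp [h]
  · simp [h]

lemma restr_of_sum_suppIn (t : Fin k → Fin n → ℕ)
    (h : ∀ j', suppIn (Finset.univ.filter fun i => g i = j') (t j')) (j : Fin k) :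
    restr k g j (∑ j', t j') = t j := by
  rw [restr_sum]
  rw [Finset.sum_eq_single j]
  · exact restr_eq_of_suppIn g (h j)
  · intro j' _ hne
    exact restr_eq_zero_of_suppIn g hne.symm (h j')
  · intro hc
    exact absurd (Finset.mem_univ j) hc

lemma glexLT_restr {α β : Fin n → ℕ} (h : glexLT β α) :
    ∃ j, glexLT (restr k g j β) (restr k g j α) := by
  rcases h with hd | ⟨hd, i0, hpre, hlt⟩
  · have hs : ∑ j, degSum (restr k g j β) < ∑ j, degSum (restr k g j α) := by
      rw [← degSum_eq_sum_restr, ← degSum_eq_sum_restr]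
      exact hd
    obtain ⟨j, _, hj⟩ := Finset.exists_lt_of_sum_lt hs
    exact ⟨j, Or.inl hj⟩
  · by_cases hall : ∀ j, degSum (restr k g j α) ≤ degSum (restr k g j β)
    · have hsum : ∑ j, degSum (restr k g j α) = ∑ j, degSum (restr k g j β) := by
        rw [← degSum_eq_sum_restr, ← degSum_eq_sum_restr]
        exact hd.symm
      have heq : ∀ j, degSum (restr k g j β) = degSum (restr k g j α) :=
        fun j => ((Finset.sum_eq_sum_iff_of_le (fun j _ => hall j)).mp hsum j
          (Finset.mem_univ j)).symm
      refine ⟨g i0, Or.inr ⟨heq _, i0, ?_, ?_⟩⟩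
      · intro j hj
        simp only [restr]
        rw [hpre j hj]
      · simpa [restr] using hlt
    · push_neg at hall
      obtain ⟨j, hj⟩ := hall
      have : degSum (restr k g j β) < degSum (restr k g j α) := by
        by_contra hc
        push_neg at hc
        have hsum : ∑ j', degSum (restr k g j' β) = ∑ j', degSum (restr k g j' α) := by
          rw [← degSum_eq_sum_restr, ← degSum_eq_sum_restr]; exact hd
        omega
      exact ⟨j, Or.inl this⟩

lemma glexLE_of_restr {α β : Fin n → ℕ}
    (h : ∀ j, glexLE (restr k g j β) (restr k g j α)) : glexLE β α := by
  classical
  by_cases hne : β = α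
  · exact Or.inr hne
  left
  have hle : ∀ j, degSum (restr k g j β) ≤ degSum (restr k g j α) :=
    fun j => degSum_le_of_glexLE (h j)
  have hdle : degSum β ≤ degSum α := by
    rw [degSum_eq_sum_restr g β, degSum_eq_sum_restr g α]
    exact Finset.sum_le_sum fun j _ => hle j
  rcases lt_or_eq_of_le hdle with h1 | h1
  · exact Or.inl h1
  right
  refine ⟨h1, ?_⟩
  have hsum : ∑ j, degSum (restr k g j β) = ∑ j, degSum (restr k g j α) := by
    rw [← degSum_eq_sum_restr, ← degSum_eq_sum_restr]; exact h1
  have heq : ∀ j, degSum (restr k g j β) = degSum (restr k g j α) :=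
    fun j => (Finset.sum_eq_sum_iff_of_le (fun j _ => hle j)).mp hsum j (Finset.mem_univ j)
  have hD : (Finset.univ.filter (fun i => β i ≠ α i)).Nonempty := by
    by_contra hc
    rw [Finset.not_nonempty_iff_eq_empty, Finset.filter_eq_empty_iff] at hc
    exact hne (funext fun i => not_not.mp (hc (Finset.mem_univ i)))
  set D := Finset.univ.filter (fun i => β i ≠ α i) with hD_def
  set i0 := D.min' hD with hi0_def
  have hi0 : β i0 ≠ α i0 := (Finset.mem_filter.mp (D.min'_mem hD)).2
  have hpre : ∀ j, j < i0 → β j = α j := by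
    intro j hj
    by_contra hne'
    exact absurd (D.min'_le j (by simp [hD_def, hne'])) (not_le.mpr hj)
  refine ⟨i0, hpre, ?_⟩
  rcases h (g i0) with hlt | heq'
  · rcases hlt with hdlt | ⟨_, i1, hpre1, hlt1⟩
    · exact absurd hdlt (by rw [heq (g i0)]; exact lt_irrefl _)
    · have hg1 : g i1 = g i0 := by
        by_contra hc
        simp [restr, hc] at hlt1
      have hb1 : β i1 < α i1 := by simpa [restr, hg1] using hlt1
      have hi1D : i1 ∈ D := by simp [hD_def]; omega
      have h01 : i0 ≤ i1 := D.min'_le i1 hi1D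
      rcases lt_or_eq_of_le h01 with h01 | h01
      · have := hpre1 i0 h01
        simp only [restr, if_pos rfl] at this
        exact absurd this hi0
      · rw [h01]; exact hb1
  · have : β i0 = α i0 := by
      have := congrFun heq' i0
      simpa [restr] using this
    exact absurd this hi0

end Groups


/-- Orthonormal polynomials in the subset `S` of the variables, for the restriction of
`L_y` to polynomials in those variables. -/
structure IsONFamilyOn (n : ℕ) (S : Finset (Fin n)) (d : ℕ) (y : (Fin n → ℕ) → ℝ)
    (p : (Fin n → ℕ) → MvPolynomial (Fin n) ℝ) : Prop where
  span : ∀ α, suppIn S α → degSum α ≤ d →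
    ∀ γ : Fin n → ℕ, coeffOf (p α) γ ≠ 0 → suppIn S γ ∧ glexLE γ α
  orth : ∀ α β, suppIn S α → suppIn S β → degSum α ≤ d → degSum β ≤ d →
    Ly y (p α * p β) = if α = β then 1 else 0
  lower : ∀ α β, suppIn S α → suppIn S β → degSum α ≤ d → degSum β ≤ d →
    glexLT β α → Ly y (p α * mono β) = 0
  pos : ∀ α, suppIn S α → degSum α ≤ d → 0 < Ly y (p α * mono α)

/-- **Factorization along groups (Section 4).** Under partial independence the orthonormal
polynomials factor as `p_α = p^{(1)}_{α₁}(X(1))⋯p^{(k)}_{α_k}(X(k))`; in particular `p_α`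
contains only monomials `X^γ` with `γ_j ≤_gl α_j` for every group `j`. -/
theorem stmt9 (n k d : ℕ) (hn : 1 ≤ n) (hk : 1 ≤ k) (g : Fin n → Fin k)
    (y : (Fin n → ℕ) → ℝ) (hy0 : y 0 = 1)
    (hpd : (momMat n d y).PosDef) (hpi : PartialIndep n k d g y)
    (p : (Fin n → ℕ) → MvPolynomial (Fin n) ℝ) (hp : IsONFamily n d y p)
    (q : Fin k → (Fin n → ℕ) → MvPolynomial (Fin n) ℝ)
    (hq : ∀ j, IsONFamilyOn n (Finset.univ.filter fun i => g i = j) d y (q j))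
    (α : Fin n → ℕ) (hα : degSum α ≤ d) :
    p α = (∏ j, q j (restr k g j α)) ∧
    ∀ γ : Fin n → ℕ, coeffOf (p α) γ ≠ 0 →
      ∀ j, glexLE (restr k g j γ) (restr k g j α) := by
  classical
  set Q : MvPolynomial (Fin n) ℝ := ∏ j, q j (restr k g j α) with hQ
  have hdegj : ∀ j, degSum (restr k g j α) ≤ d :=
    fun j => le_trans (degSum_restr_le g j α) hα
  have hsuppj : ∀ j, suppIn (Finset.univ.filter fun i => g i = j) (restr k g j α) :=
    fun j => suppIn_restr g j α
  have hspanq : ∀ j (m : Fin n →₀ ℕ), m ∈ (q j (restr k g j α)).support →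
      suppIn (Finset.univ.filter fun i => g i = j) ⇑m ∧ glexLE ⇑m (restr k g j α) := by
    intro j m hm
    exact (hq j).span _ (hsuppj j) (hdegj j) _
      (by rw [coeffOf_coe]; exact MvPolynomial.mem_support_iff.mp hm)
  have hvarsq : ∀ j, ∀ i ∈ (q j (restr k g j α)).vars, g i = j := by
    intro j i hi
    obtain ⟨m, hm, him⟩ := (MvPolynomial.mem_vars i).mp hi
    have hs := (hspanq j m hm).1
    by_contra hc
    exact (Finsupp.mem_support_iff.mp him) (hs i (by simp [hc]))
  have hdegq : ∀ j, (q j (restr k g j α)).totalDegree ≤ degSum (restr k g j α) := by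
    intro j
    apply totalDegree_le_of_support
    intro m hm
    exact degSum_le_of_glexLE (hspanq j m hm).2
  have key : ∀ β : Fin n → ℕ, degSum β ≤ d →
      Ly y (Q * mono β) = ∏ j, Ly y (q j (restr k g j α) * mono (restr k g j β)) := by
    intro β hβ
    have hmono : mono β = ∏ j, mono (restr k g j β) := by
      rw [← mono_sum, sum_restr]
    have h1 : Q * mono β = ∏ j, (q j (restr k g j α) * mono (restr k g j β)) := by
      rw [hQ, hmono, Finset.prod_mul_distrib]
    rw [h1]
    apply hpi
    · intro j i hi
      rcases Finset.mem_union.mp (MvPolynomial.vars_mul _ _ hi) with h | h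
      · exact hvarsq j i h
      · have h2 := vars_mono h
        by_contra hc
        exact h2 (by simp [restr, hc])
    · calc ∑ j, ((q j (restr k g j α)) * mono (restr k g j β)).totalDegree
          ≤ ∑ j, (degSum (restr k g j α) + degSum (restr k g j β)) := by
            apply Finset.sum_le_sum
            intro j _
            exact le_trans (MvPolynomial.totalDegree_mul _ _)
              (add_le_add (hdegq j) (totalDegree_mono_le _))
        _ = degSum α + degSum β := by
            rw [Finset.sum_add_distrib, ← degSum_eq_sum_restr, ← degSum_eq_sum_restr]
        _ ≤ 2 * d := by omega
  have hQQ : Ly y (Q * Q) = 1 := by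
    have h1 : Q * Q = ∏ j, (q j (restr k g j α) * q j (restr k g j α)) := by
      rw [hQ, Finset.prod_mul_distrib]
    rw [h1, hpi _ ?hv ?hd]
    case hv =>
      intro j i hi
      rcases Finset.mem_union.mp (MvPolynomial.vars_mul _ _ hi) with h | h
      · exact hvarsq j i h
      · exact hvarsq j i h
    case hd =>
      calc ∑ j, ((q j (restr k g j α)) * q j (restr k g j α)).totalDegree
          ≤ ∑ j, (degSum (restr k g j α) + degSum (restr k g j α)) := by
            apply Finset.sum_le_sum
            intro j _
            exact le_trans (MvPolynomial.totalDegree_mul _ _)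
              (add_le_add (hdegq j) (hdegq j))
        _ = degSum α + degSum α := by
            rw [Finset.sum_add_distrib, ← degSum_eq_sum_restr]
        _ ≤ 2 * d := by omega
    apply Finset.prod_eq_one
    intro j _
    rw [(hq j).orth _ _ (hsuppj j) (hsuppj j) (hdegj j) (hdegj j), if_pos rfl]
  have hQlow : ∀ β, degSum β ≤ d → glexLT β α → Ly y (Q * mono β) = 0 := by
    intro β hβ hlt
    rw [key β hβ]
    obtain ⟨j, hj⟩ := glexLT_restr g hlt
    apply Finset.prod_eq_zero (Finset.mem_univ j)
    exact (hq j).lower _ _ (hsuppj j) (suppIn_restr g j β) (hdegj j)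
      (le_trans (degSum_restr_le g j β) hβ) hj
  have hQpos : 0 < Ly y (Q * mono α) := by
    rw [key α hα]
    apply Finset.prod_pos
    intro j _
    have h2 := (hq j).pos _ (hsuppj j) (hdegj j)
    exact h2
  have hQco : ∀ m ∈ Q.support, ∀ j, glexLE (restr k g j ⇑m) (restr k g j α) := by
    intro m hm j
    have hm' : m ∈ (∏ j, q j (restr k g j α)).support := by rw [← hQ]; exact hm
    obtain ⟨t, ht, hteq⟩ := mem_support_prod Finset.univ _ m hm'
    have hts : ∀ j', suppIn (Finset.univ.filter fun i => g i = j') ⇑(t j')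
        ∧ glexLE ⇑(t j') (restr k g j' α) :=
      fun j' => hspanq j' (t j') (ht j' (Finset.mem_univ j'))
    have hmfun : ⇑m = ∑ j', ⇑(t j') := by
      rw [hteq]
      exact Finsupp.coe_finset_sum _ _
    have hre : restr k g j ⇑m = ⇑(t j) := by
      rw [hmfun]
      exact restr_of_sum_suppIn g _ (fun j' => (hts j').1) j
    rw [hre]
    exact (hts j).2
  have hQle : ∀ m ∈ Q.support, glexLE ⇑m α :=
    fun m hm => glexLE_of_restr g (hQco m hm)
  have hPle : ∀ m ∈ (p α).support, glexLE ⇑m α := by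
    intro m hm
    exact hp.span α hα ⇑m
      (by rw [coeffOf_coe]; exact MvPolynomial.mem_support_iff.mp hm)
  have hPlow : ∀ β, degSum β ≤ d → glexLT β α → Ly y (p α * mono β) = 0 :=
    fun β hβ hlt => hp.lower α β hα hβ hlt
  have expand : ∀ w : MvPolynomial (Fin n) ℝ, (∀ m ∈ w.support, glexLE ⇑m α) →
      (∀ β, degSum β ≤ d → glexLT β α → Ly y (w * mono β) = 0) →
      Ly y (w * w) = coeffOf w α * Ly y (w * mono α) := by
    intro w hle hlow
    rw [Ly_mul_expand]
    refine (Finset.sum_eq_single (Finsupp.equivFunOnFinite.symm α) ?_ ?_).trans ?_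
    · intro m hm hne
      have hnea : ⇑m ≠ α := fun h => hne (DFunLike.coe_injective (h.trans (coe_symm α).symm))
      have hlt := glexLT_of_glexLE_ne (hle m hm) hnea
      rw [hlow ⇑m (le_trans (degSum_le_of_glexLE (hle m hm)) hα) hlt, mul_zero]
    · intro hnm
      rw [MvPolynomial.notMem_support_iff.mp hnm, zero_mul]
    · rw [coe_symm]
      rfl
  have e1 : (1 : ℝ) = coeffOf (p α) α * Ly y (p α * mono α) := by
    have e := expand (p α) hPle hPlow
    rw [hp.orth α α hα hα, if_pos rfl] at e
    exact e
  have e2 : (1 : ℝ) = coeffOf Q α * Ly y (Q * mono α) := by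
    have e := expand Q hQle hQlow
    rw [hQQ] at e
    exact e
  have hLApos : 0 < Ly y (p α * mono α) := hp.pos α hα
  have hapos : 0 < coeffOf (p α) α := by nlinarith [hLApos, e1]
  have hbpos : 0 < coeffOf Q α := by nlinarith [hQpos, e2]
  set a := coeffOf (p α) α with ha_def
  set b := coeffOf Q α with hb_def
  set r : MvPolynomial (Fin n) ℝ := b • p α - a • Q with hr
  have hrle : ∀ m ∈ r.support, glexLE ⇑m α := by
    intro m hm
    have hc := MvPolynomial.mem_support_iff.mp hm
    rw [hr, MvPolynomial.coeff_sub, MvPolynomial.coeff_smul, MvPolynomial.coeff_smul] at hc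
    by_cases h1 : m ∈ (p α).support
    · exact hPle m h1
    by_cases h2 : m ∈ Q.support
    · exact hQle m h2
    exfalso
    apply hc
    rw [MvPolynomial.notMem_support_iff.mp h1, MvPolynomial.notMem_support_iff.mp h2]
    simp
  have hrα : r.coeff (Finsupp.equivFunOnFinite.symm α) = 0 := by
    rw [hr, MvPolynomial.coeff_sub, MvPolynomial.coeff_smul, MvPolynomial.coeff_smul]
    show b • a - a • b = 0
    simp [smul_eq_mul, mul_comm]
  have hrlow : ∀ β, degSum β ≤ d → glexLT β α → Ly y (r * mono β) = 0 := by
    intro β hβ hlt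
    rw [hr, sub_mul, smul_mul_assoc, smul_mul_assoc, Ly_sub, Ly_smul, Ly_smul,
      hPlow β hβ hlt, hQlow β hβ hlt]
    ring
  have hrr : Ly y (r * r) = 0 := by
    rw [Ly_mul_expand]
    apply Finset.sum_eq_zero
    intro m hm
    by_cases hme : m = Finsupp.equivFunOnFinite.symm α
    · rw [hme, hrα, zero_mul]
    · have hnea : ⇑m ≠ α := fun h => hme (DFunLike.coe_injective (h.trans (coe_symm α).symm))
      have hlt := glexLT_of_glexLE_ne (hrle m hm) hnea
      rw [hrlow ⇑m (le_trans (degSum_le_of_glexLE (hrle m hm)) hα) hlt, mul_zero]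
  have hrdeg : ∀ m ∈ r.support, degSum ⇑m ≤ d :=
    fun m hm => le_trans (degSum_le_of_glexLE (hrle m hm)) hα
  have hr0 : r = 0 := Ly_quadratic hpd r hrdeg hrr
  have hba : b • p α = a • Q := by rwa [hr, sub_eq_zero] at hr0
  have hpQ : p α = (b⁻¹ * a) • Q := by
    have h3 := congrArg (fun z => b⁻¹ • z) hba
    simp only [smul_smul] at h3
    rwa [inv_mul_cancel₀ (ne_of_gt hbpos), one_smul] at h3
  have hc1 : b⁻¹ * a = 1 := by
    have h2 : Ly y (p α * p α) = (b⁻¹ * a) * ((b⁻¹ * a) * Ly y (Q * Q)) := by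
      rw [hpQ, smul_mul_assoc, mul_smul_comm, Ly_smul, Ly_smul]
    rw [hp.orth α α hα hα, if_pos rfl, hQQ, mul_one] at h2
    have hcpos : 0 < b⁻¹ * a := mul_pos (inv_pos.mpr hbpos) hapos
    nlinarith [hcpos, h2]
  have hfinal : p α = Q := by rw [hpQ, hc1, one_smul]
  refine ⟨hfinal, ?_⟩
  intro γ hγ j
  rw [hfinal] at hγ
  have hm : Finsupp.equivFunOnFinite.symm γ ∈ Q.support :=
    MvPolynomial.mem_support_iff.mpr hγ
  have h4 := hQco _ hm j
  rwa [coe_symm] at h4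


end Paper
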